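/- arXiv:1802.00709 — 3 statements merged into one kernel-verified Lean document; each statement's English description precedes it below -/
import Mathlib

section
/- Let X^1, …, X^n be jointly Gaussian centered random variables such that there is κ > 0 with Var(∑_{i=1}^n x_i (X^i - X^{i-1})) ≥ κ ∑_{i=1}^n x_i^2 c_i for all real x_1, …, x_n, where X^0 = 0 and c_i > 0. Then the determinant of the covariance matrix A of (X^1, …, X^n) satisfies det A ≥ κ^n ∏_{i=1}^n c_i. -/
/-!
Write `Z k = X^(k+1) - X^k` for the increments and `M` for their second-moment matrix. Since
`X^(i+1) = ∑_{k ≤ i} Z k`, we have `A = L M Lᵀ` with `L` lower unitriangular, so `det A = det M`.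
The nondeterminism inequality says exactly that `M - κ diag(c)` is positive semidefinite, and the
determinant is monotone along such perturbations of a positive definite matrix: writing
`D = S²` with `S = √D`, `det (D + P) = det D · det (1 + S⁻¹ P S⁻¹)` and every eigenvalue of
`1 + S⁻¹ P S⁻¹` is at least `1`.
-/

open MeasureTheory ProbabilityTheory

open Matrix
open scoped MatrixOrder

namespace Matrix

variable {n : Type*} [Fintype n] [DecidableEq n]

theorem one_le_det_one_add {Q : Matrix n n ℝ} (hQ : Q.PosSemidef) : 1 ≤ (1 + Q).det := by
  have hH : (1 + Q).IsHermitian := isHermitian_one.add hQ.isHermitian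
  rw [hH.det_eq_prod_eigenvalues]
  refine Finset.one_le_prod fun i _ => ?_
  set v := hH.eigenvectorBasis i
  have hv : star ⇑v ⬝ᵥ ⇑v = 1 := by
    rw [dotProduct_comm, ← EuclideanSpace.inner_eq_star_dotProduct, real_inner_self_eq_norm_sq,
      hH.eigenvectorBasis.orthonormal.1 i, one_pow]
  rw [hH.eigenvalues_eq, add_mulVec, one_mulVec, dotProduct_add, hv]
  simpa using hQ.dotProduct_mulVec_nonneg ⇑v

theorem det_le_det_add {D P : Matrix n n ℝ} (hD : D.PosDef) (hP : P.PosSemidef) :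
    D.det ≤ (D + P).det := by
  set S := CFC.sqrt D
  have hSS : S * S = D := CFC.sqrt_mul_sqrt_self D hD.posSemidef.nonneg
  have hST : Sᵀ = S := by
    simpa [star_eq_conjTranspose] using (CFC.sqrt_nonneg D).isSelfAdjoint.star_eq
  have hS : IsUnit S.det := by
    rw [isUnit_iff_ne_zero, hD.posSemidef.det_sqrt, RCLike.sqrt_of_nonneg hD.det_pos.le]
    exact (Real.sqrt_pos.mpr hD.det_pos).ne'
  have hQ : (S⁻¹ * P * S⁻¹).PosSemidef := by
    simpa [transpose_nonsing_inv, hST] using hP.mul_mul_conjTranspose_same S⁻¹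
  have hfactor : D + P = S * (1 + S⁻¹ * P * S⁻¹) * S := by
    rw [mul_add, add_mul, mul_one, hSS, ← mul_assoc, ← mul_assoc, mul_nonsing_inv _ hS, one_mul,
      mul_assoc, nonsing_inv_mul _ hS, mul_one]
  rw [hfactor, det_mul, det_mul, mul_right_comm, ← det_mul, hSS]
  exact le_mul_of_one_le_right hD.det_pos.le (one_le_det_one_add hQ)

def partialSumMatrix (m R : Type*) [LE m] [DecidableLE m] [Zero R] [One R] : Matrix m m R :=
  of fun i k => if k ≤ i then 1 else 0

theorem det_partialSumMatrix {m R : Type*} [Fintype m] [LinearOrder m] [CommRing R] :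
    (partialSumMatrix m R).det = 1 := by
  rw [det_of_isLowerTriangular (partialSumMatrix m R) fun i k hik => if_neg (not_le.mpr hik)]
  simp [partialSumMatrix]

theorem partialSumMatrix_mulVec_sub {R : Type*} [CommRing R] {N : ℕ} (g : ℕ → R) (i : Fin N) :
    (partialSumMatrix (Fin N) R *ᵥ fun k => g (k + 1) - g k) i = g (i + 1) - g 0 := by
  rw [← Finset.sum_range_sub, Nat.range_succ_eq_Iic, ← Fin.map_valEmbedding_Iic, Finset.sum_map]
  simp [partialSumMatrix, mulVec, dotProduct, ← Finset.sum_filter, Finset.filter_ge_eq_Iic]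

end Matrix

@[to_additive]
theorem Finset.prod_Icc_eq_prod_fin {M : Type*} [CommMonoid M] (N : ℕ) (f : ℕ → M) :
    ∏ i ∈ Finset.Icc 1 N, f i = ∏ k : Fin N, f (k + 1) := by
  rw [← Finset.Ico_add_one_right_eq_Icc, Finset.prod_Ico_eq_prod_range,
    Fin.prod_univ_eq_prod_range (fun k => f (k + 1))]
  simp [add_comm]

section SecondMoment

variable {Ω ι : Type*} [MeasurableSpace Ω] {μ : Measure Ω}

theorem memLp_two_of_map_eq_gaussianReal {Y : Ω → ℝ} (hY : AEMeasurable Y μ) {m : ℝ}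
    {v : NNReal} (h : μ.map Y = gaussianReal m v) : MemLp Y 2 μ :=
  (memLp_map_measure_iff aestronglyMeasurable_id hY).mp (h ▸ memLp_id_gaussianReal 2)

theorem memLp_two_of_forall_map_sum_eq_gaussianReal {X : ι → Ω → ℝ} {s : Finset ι}
    (hX : ∀ i, AEMeasurable (X i) μ)
    (hGauss : ∀ x : ι → ℝ, ∃ m : ℝ, ∃ v : NNReal,
      μ.map (fun ω => ∑ i ∈ s, x i * X i ω) = gaussianReal m v)
    {j : ι} (hj : j ∈ s) : MemLp (X j) 2 μ := by
  classical
  obtain ⟨m, v, hv⟩ := hGauss fun i => if i = j then 1 else 0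
  have hsum : (fun ω => ∑ i ∈ s, (if i = j then 1 else 0) * X i ω) = X j := by
    ext ω
    simp [hj]
  exact memLp_two_of_map_eq_gaussianReal (hX j) (hsum ▸ hv)

variable {f : ι → Ω → ℝ}

noncomputable def secondMomentMatrix (μ : Measure Ω) (f : ι → Ω → ℝ) : Matrix ι ι ℝ :=
  of fun i j => ∫ ω, f i ω * f j ω ∂μ

theorem isHermitian_secondMomentMatrix : (secondMomentMatrix μ f).IsHermitian := by
  ext i j
  simp [secondMomentMatrix, mul_comm]

variable [Fintype ι]

theorem integral_sum_mul_sum (hf : ∀ i, MemLp (f i) 2 μ) (a b : ι → ℝ) :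
    ∫ ω, (∑ i, a i * f i ω) * (∑ j, b j * f j ω) ∂μ = a ⬝ᵥ secondMomentMatrix μ f *ᵥ b := by
  have hint : ∀ i j, Integrable (fun ω => a i * b j * (f i ω * f j ω)) μ := fun i j =>
    ((hf i).integrable_mul (hf j)).const_mul _
  have hexpand : ∀ ω, (∑ i, a i * f i ω) * (∑ j, b j * f j ω)
      = ∑ i, ∑ j, a i * b j * (f i ω * f j ω) := fun ω => by
    simp_rw [Finset.sum_mul_sum, mul_mul_mul_comm]
  simp_rw [hexpand]
  rw [integral_finsetSum _ fun i _ => integrable_finsetSum _ fun j _ => hint i j]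
  simp_rw [integral_finsetSum _ fun j _ => hint _ j, integral_const_mul]
  simp only [dotProduct, mulVec, secondMomentMatrix, of_apply, Finset.mul_sum]
  exact Finset.sum_congr rfl fun i _ => Finset.sum_congr rfl fun j _ => by ring

theorem secondMomentMatrix_mulVec {κ : Type*} (hf : ∀ i, MemLp (f i) 2 μ) (L : Matrix κ ι ℝ) :
    secondMomentMatrix μ (fun k ω => (L *ᵥ fun i => f i ω) k) =
      L * secondMomentMatrix μ f * Lᵀ := by
  ext k l
  rw [secondMomentMatrix, of_apply]
  simp only [mulVec, dotProduct]
  rw [integral_sum_mul_sum hf, dotProduct_mulVec, mul_apply]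
  rfl

variable [DecidableEq ι]

theorem posSemidef_secondMomentMatrix_sub_diagonal (hf : ∀ i, MemLp (f i) 2 μ) (d : ι → ℝ)
    (h : ∀ x : ι → ℝ, ∑ i, x i ^ 2 * d i ≤ ∫ ω, (∑ i, x i * f i ω) ^ 2 ∂μ) :
    (secondMomentMatrix μ f - diagonal d).PosSemidef := by
  refine .of_dotProduct_mulVec_nonneg (isHermitian_secondMomentMatrix.sub (isHermitian_diagonal d))
    fun x => ?_
  rw [sub_mulVec, dotProduct_sub, star_trivial, sub_nonneg]
  calc x ⬝ᵥ diagonal d *ᵥ x = ∑ i, x i ^ 2 * d i := by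
        simp only [dotProduct, mulVec_diagonal]
        exact Finset.sum_congr rfl fun i _ => by ring
    _ ≤ ∫ ω, (∑ i, x i * f i ω) ^ 2 ∂μ := h x
    _ = x ⬝ᵥ secondMomentMatrix μ f *ᵥ x := by simp_rw [sq, integral_sum_mul_sum hf]

theorem prod_le_det_secondMomentMatrix (hf : ∀ i, MemLp (f i) 2 μ) {d : ι → ℝ}
    (hd : ∀ i, 0 < d i)
    (h : ∀ x : ι → ℝ, ∑ i, x i ^ 2 * d i ≤ ∫ ω, (∑ i, x i * f i ω) ^ 2 ∂μ) :
    ∏ i, d i ≤ (secondMomentMatrix μ f).det := by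
  have := det_le_det_add (posDef_diagonal_iff.mpr hd)
    (posSemidef_secondMomentMatrix_sub_diagonal hf d h)
  rwa [add_sub_cancel, det_diagonal] at this

end SecondMoment

theorem stmt4_general {Ω : Type*} [MeasureSpace Ω]
    (n : ℕ) (X : ℕ → Ω → ℝ) (hmeas : ∀ i, Measurable (X i))
    (hX0 : ∀ ω, X 0 ω = 0)
    (hGauss : ∀ x : ℕ → ℝ, ∃ v : NNReal,
      Measure.map (fun ω => ∑ i ∈ Finset.Icc 1 n, x i * X i ω) ℙ = gaussianReal 0 v)
    (κ : ℝ) (hκ : 0 < κ) (c : ℕ → ℝ) (hc : ∀ i, 0 < c i)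
    (hnd : ∀ x : ℕ → ℝ,
      κ * ∑ i ∈ Finset.Icc 1 n, (x i) ^ 2 * c i ≤
        ∫ ω, (∑ i ∈ Finset.Icc 1 n, x i * (X i ω - X (i - 1) ω)) ^ 2)
    (A : Matrix (Fin n) (Fin n) ℝ)
    (hA : ∀ i j : Fin n, A i j = ∫ ω, X ((i : ℕ) + 1) ω * X ((j : ℕ) + 1) ω) :
    κ ^ n * ∏ i ∈ Finset.Icc 1 n, c i ≤ A.det := by
  have hXL2 : ∀ j ≤ n, MemLp (X j) 2 ℙ := fun j hj => by
    rcases j.eq_zero_or_pos with rfl | hj1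
    · simp [show X 0 = 0 from funext hX0]
    · exact memLp_two_of_forall_map_sum_eq_gaussianReal (fun i => (hmeas i).aemeasurable)
        (fun x => ⟨0, hGauss x⟩) (Finset.mem_Icc.mpr ⟨hj1, hj⟩)
  obtain ⟨Z, hZdef⟩ : ∃ Z : Fin n → Ω → ℝ, ∀ k, Z k = X (k + 1) - X k := ⟨_, fun _ => rfl⟩
  have hZ : ∀ k, MemLp (Z k) 2 ℙ := fun k => hZdef k ▸ (hXL2 _ k.2).sub (hXL2 _ k.2.le)
  have hXZ : ∀ (i : Fin n) ω, X (i + 1) ω = (partialSumMatrix (Fin n) ℝ *ᵥ fun k => Z k ω) i :=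
    fun i ω => by
      simp only [hZdef, Pi.sub_apply, partialSumMatrix_mulVec_sub (X · ω), hX0, sub_zero]
  have hAZ : A = partialSumMatrix (Fin n) ℝ * secondMomentMatrix ℙ Z *
      (partialSumMatrix (Fin n) ℝ)ᵀ := by
    rw [← secondMomentMatrix_mulVec hZ]
    ext i j
    rw [hA]
    simp only [secondMomentMatrix, of_apply, hXZ]
  have hndZ : ∀ x : Fin n → ℝ, ∑ k, x k ^ 2 * (κ * c (k + 1)) ≤ ∫ ω, (∑ k, x k * Z k ω) ^ 2 :=
    fun x => by
      simpa [Finset.sum_Icc_eq_sum_fin, hZdef, Finset.mul_sum, mul_left_comm] using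
        hnd fun i => if h : i - 1 < n then x ⟨i - 1, h⟩ else 0
  calc κ ^ n * ∏ i ∈ Finset.Icc 1 n, c i = ∏ k : Fin n, κ * c (k + 1) := by
        rw [Finset.prod_mul_distrib, Finset.prod_const, Finset.card_univ, Fintype.card_fin,
          Finset.prod_Icc_eq_prod_fin]
    _ ≤ (secondMomentMatrix ℙ Z).det :=
        prod_le_det_secondMomentMatrix hZ (fun k => mul_pos hκ (hc _)) hndZ
    _ = A.det := by
        rw [hAZ, det_mul, det_mul, det_transpose, det_partialSumMatrix, one_mul, mul_one]

theorem stmt4 {Ω : Type*} [MeasureSpace Ω]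
    (hP : IsProbabilityMeasure (ℙ : Measure Ω))
    (n : ℕ) (X : ℕ → Ω → ℝ) (hmeas : ∀ i, Measurable (X i))
    (hX0 : ∀ ω, X 0 ω = 0)
    (hcentered : ∀ i, ∫ ω, X i ω = 0)
    (hGauss : ∀ x : ℕ → ℝ, ∃ v : NNReal,
      Measure.map (fun ω => ∑ i ∈ Finset.Icc 1 n, x i * X i ω) ℙ = gaussianReal 0 v)
    (κ : ℝ) (hκ : 0 < κ) (c : ℕ → ℝ) (hc : ∀ i, 0 < c i)
    (hnd : ∀ x : ℕ → ℝ,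
      κ * ∑ i ∈ Finset.Icc 1 n, (x i) ^ 2 * c i ≤
        ∫ ω, (∑ i ∈ Finset.Icc 1 n, x i * (X i ω - X (i - 1) ω)) ^ 2)
    (A : Matrix (Fin n) (Fin n) ℝ)
    (hA : ∀ i j : Fin n, A i j = ∫ ω, X ((i : ℕ) + 1) ω * X ((j : ℕ) + 1) ω) :
    κ ^ n * ∏ i ∈ Finset.Icc 1 n, c i ≤ A.det :=
  stmt4_general n X hmeas hX0 hGauss κ hκ c hc hnd A hA
end

section
/- For H ∈ (0,1) and d ≥ 1 with Hd > 1, the integral n^{Hd-2} ∫_0^{εn^{1/2}} ∫_0^{nb} (s^{2H} + r^{2H})^{-d/2} ds dr tends to 0 as n → ∞, for any fixed ε > 0 and b > 0. -/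
open MeasureTheory Filter Real Set

/-!
By AM–GM, `s ^ H * r ^ H ≤ s ^ (2H) + r ^ (2H)`, so the integrand is at most `s ^ c * r ^ c`
with `c = -Hd/2 > -1`. The integral over `(0, A] × (0, B]` is therefore at most
`(AB) ^ (c+1) / (c+1)^2`, and with `A = ε √n`, `B = nb` the prefactor `n ^ (Hd-2)` turns this
into a constant times `n ^ ((Hd-2)/4)`, which tends to `0` because `Hd < 2`.
-/

lemma rpow_two_mul_add_rpow_two_mul_rpow_le {s r : ℝ} (hs : 0 < s) (hr : 0 < r) (H : ℝ)
    {p : ℝ} (hp : p ≤ 0) :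
    (s ^ (2 * H) + r ^ (2 * H)) ^ p ≤ s ^ (H * p) * r ^ (H * p) := by
  have hsH := rpow_pos_of_pos hs H
  have hrH := rpow_pos_of_pos hr H
  have hmean : s ^ H * r ^ H ≤ s ^ (2 * H) + r ^ (2 * H) := by
    rw [mul_comm 2 H, rpow_mul hs.le, rpow_mul hr.le, rpow_two, rpow_two]
    nlinarith [sq_nonneg (s ^ H - r ^ H)]
  calc (s ^ (2 * H) + r ^ (2 * H)) ^ p ≤ (s ^ H * r ^ H) ^ p :=
        rpow_le_rpow_of_nonpos (mul_pos hsH hrH) hmean hp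
    _ = s ^ (H * p) * r ^ (H * p) := by
        rw [mul_rpow hsH.le hrH.le, ← rpow_mul hs.le, ← rpow_mul hr.le]

lemma integrableOn_Ioc_rpow {c : ℝ} (hc : -1 < c) {a : ℝ} (ha : 0 ≤ a) :
    IntegrableOn (fun x : ℝ => x ^ c) (Ioc 0 a) :=
  (intervalIntegrable_iff_integrableOn_Ioc_of_le ha).mp
    (intervalIntegral.intervalIntegrable_rpow' hc)

lemma integral_Ioc_rpow {c : ℝ} (hc : -1 < c) {a : ℝ} (ha : 0 ≤ a) :
    ∫ x in Ioc 0 a, x ^ c = a ^ (c + 1) / (c + 1) := by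
  rw [← intervalIntegral.integral_of_le ha, integral_rpow (Or.inl hc),
    zero_rpow (by linarith), sub_zero]

lemma setIntegral_setIntegral_le_mul {α β : Type*} [MeasurableSpace α] [MeasurableSpace β]
    {μ : Measure α} {ν : Measure β} {S : Set α} {T : Set β} (hT : MeasurableSet T)
    {f : α → β → ℝ} {g : α → ℝ} {h : β → ℝ}
    (hf : ∀ x ∈ S, ∀ y ∈ T, 0 ≤ f x y) (hfgh : ∀ x ∈ S, ∀ y ∈ T, f x y ≤ g x * h y)
    (hg : IntegrableOn g S μ) (hh : IntegrableOn h T ν) :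
    ∫ x in S, ∫ y in T, f x y ∂ν ∂μ ≤ (∫ x in S, g x ∂μ) * ∫ y in T, h y ∂ν := by
  have hinner : ∀ x ∈ S, ∫ y in T, f x y ∂ν ≤ g x * ∫ y in T, h y ∂ν := fun x hx => by
    rw [← integral_const_mul]
    exact setIntegral_mono_of_nonneg (hf x hx) (hfgh x hx) (hh.const_mul _)
  rw [← integral_mul_const]
  exact setIntegral_mono_of_nonneg (fun x hx => setIntegral_nonneg hT (hf x hx)) hinner
    (hg.mul_const _)

lemma integral_Ioc_integral_Ioc_rpow_add_le {A B : ℝ} (hA : 0 ≤ A) (hB : 0 ≤ B) (H : ℝ)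
    {p : ℝ} (hp : p ≤ 0) (hHp : -1 < H * p) :
    ∫ s in Ioc 0 A, ∫ r in Ioc 0 B, (s ^ (2 * H) + r ^ (2 * H)) ^ p
      ≤ (A * B) ^ (H * p + 1) / (H * p + 1) ^ 2 := by
  calc ∫ s in Ioc 0 A, ∫ r in Ioc 0 B, (s ^ (2 * H) + r ^ (2 * H)) ^ p
      ≤ (∫ s in Ioc 0 A, s ^ (H * p)) * ∫ r in Ioc 0 B, r ^ (H * p) :=
        setIntegral_setIntegral_le_mul measurableSet_Ioc
          (fun s hs r hr => by have := hs.1; have := hr.1; positivity)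
          (fun s hs r hr => rpow_two_mul_add_rpow_two_mul_rpow_le hs.1 hr.1 H hp)
          (integrableOn_Ioc_rpow hHp hA) (integrableOn_Ioc_rpow hHp hB)
    _ = (A * B) ^ (H * p + 1) / (H * p + 1) ^ 2 := by
        rw [integral_Ioc_rpow hHp hA, integral_Ioc_rpow hHp hB, mul_rpow hA hB,
          div_mul_div_comm, sq]

theorem stmt14_general (H : ℝ) (d : ℕ)
    (h2 : H * d < 2) (ε b : ℝ) (hε : 0 < ε) (hb : 0 < b) :
    Tendsto (fun n : ℕ => (n : ℝ) ^ (H * d - 2) *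
        ∫ s in Set.Ioc (0:ℝ) (ε * (n : ℝ) ^ ((1:ℝ) / 2)),
          ∫ r in Set.Ioc (0:ℝ) ((n : ℝ) * b),
            (s ^ (2 * H) + r ^ (2 * H)) ^ (-(d : ℝ) / 2))
      atTop (nhds 0) := by
  have hp : -(d : ℝ) / 2 ≤ 0 := by have := d.cast_nonneg (α := ℝ); linarith
  set c := H * (-(d : ℝ) / 2) with hc
  have hc1 : -1 < c := by rw [hc]; linarith
  set K := (ε * b) ^ (c + 1) / (c + 1) ^ 2
  have hlim : Tendsto (fun n : ℕ => K * (n : ℝ) ^ ((H * d - 2) / 4)) atTop (nhds 0) := by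
    have := (tendsto_rpow_neg_atTop (by linarith : 0 < -((H * d - 2) / 4))).comp
      tendsto_natCast_atTop_atTop
    simpa [Function.comp_def] using this.const_mul K
  refine squeeze_zero' (Eventually.of_forall fun n => ?_) ?_ hlim
  · refine mul_nonneg (by positivity) (setIntegral_nonneg measurableSet_Ioc fun s hs => ?_)
    refine setIntegral_nonneg measurableSet_Ioc fun r hr => ?_
    have := hs.1; have := hr.1; positivity
  filter_upwards [eventually_gt_atTop 0] with n hn
  have hn' : (0 : ℝ) < n := Nat.cast_pos.mpr hn
  calc _ ≤ (n : ℝ) ^ (H * d - 2) *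
        ((ε * (n : ℝ) ^ ((1:ℝ) / 2) * (n * b)) ^ (c + 1) / (c + 1) ^ 2) :=
        mul_le_mul_of_nonneg_left
          (integral_Ioc_integral_Ioc_rpow_add_le (by positivity) (by positivity) H hp hc1)
          (by positivity)
    _ = K * (n : ℝ) ^ ((H * d - 2) / 4) := by
        have hAB : ε * (n : ℝ) ^ ((1:ℝ) / 2) * (n * b) = (ε * b) * (n : ℝ) ^ ((3:ℝ) / 2) := by
          rw [show (3:ℝ) / 2 = 1 / 2 + 1 by norm_num, rpow_add_one hn'.ne']
          ring
        rw [hAB, mul_rpow (by positivity) (by positivity), ← rpow_mul hn'.le]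
        rw [show (H * d - 2) / 4 = (H * d - 2) + 3 / 2 * (c + 1) by rw [hc]; ring,
          rpow_add hn']
        ring

theorem stmt14 (H : ℝ) (d : ℕ) (hH : H ∈ Set.Ioo (0:ℝ) 1) (hd : 1 ≤ d)
    (h1 : 1 < H * d) (h2 : H * d < 2) (ε b : ℝ) (hε : 0 < ε) (hb : 0 < b) :
    Tendsto (fun n : ℕ => (n : ℝ) ^ (H * d - 2) *
        ∫ s in Set.Ioc (0:ℝ) (ε * (n : ℝ) ^ ((1:ℝ) / 2)),
          ∫ r in Set.Ioc (0:ℝ) ((n : ℝ) * b),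
            (s ^ (2 * H) + r ^ (2 * H)) ^ (-(d : ℝ) / 2))
      atTop (nhds 0) :=
  stmt14_general H d h2 ε b hε hb
end

section
/- Let f ∈ L^1(R^d) with ∫ f = 0 and ∫ |f(z)| |z|^{2/H - d} dz < ∞ where 2/(d+2) < H < 2/d. Then the constant D = (1/(2π)^d) ∫_{R^d} |f̂(x)|^2 |x|^{-2/H} dx is finite, where f̂(x) = ∫ e^{i x·z} f(z) dz. -/
/-!
Two bounds on `f̂` suffice. Trivially `|f̂| ≤ ‖f‖₁`, which makes `|f̂(x)|² |x|^{-2/H}` integrable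
away from the origin since `2/H > d`. Near the origin, `∫ f = 0` gives
`f̂(x) = ∫ (e^{i⟪x, z⟫} - 1) f(z) dz`, and `|e^{it} - 1| ≤ 2 |t|^α` with `α = min(2/H - d, 1)`
yields `|f̂(x)| ≤ C |x|^α`, the moment `∫ |f(z)| |z|^α dz` being finite by the moment hypothesis.
The integrand is then `O(|x|^{2α - 2/H})` with `2α - 2/H > -d`.
-/

open MeasureTheory Real Set Metric Module

section RadialIntegrability

variable {E : Type*} [NormedAddCommGroup E] [NormedSpace ℝ E] [FiniteDimensional ℝ E]
  [MeasurableSpace E] [BorelSpace E] (μ : Measure E) [μ.IsAddHaarMeasure]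

lemma integrableOn_ball_rpow_norm {s : ℝ} (hs : -(finrank ℝ E : ℝ) < s) (R : ℝ) :
    IntegrableOn (fun x : E => ‖x‖ ^ s) (ball 0 R) μ := by
  rcases subsingleton_or_nontrivial E with hE | hE
  · have hconst : (fun x : E => ‖x‖ ^ s) = fun _ => ‖(0 : E)‖ ^ s :=
      funext fun x => by rw [Subsingleton.elim x 0]
    rw [hconst]
    exact integrableOn_const measure_ball_lt_top.ne
  rw [integrableOn_fun_norm_addHaar μ (f := fun y => y ^ s)]
  rcases le_or_gt R 0 with hR | hR
  · simp [Ioo_eq_empty_of_le hR]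
  have hdim : ((finrank ℝ E - 1 : ℕ) : ℝ) = finrank ℝ E - 1 := by
    rw [Nat.cast_pred finrank_pos]
  refine ((intervalIntegral.integrableOn_Ioo_rpow_iff hR).2 (by linarith :
    -1 < s + (finrank ℝ E - 1 : ℕ))).congr_fun (fun y hy => ?_) measurableSet_Ioo
  rw [smul_eq_mul, ← rpow_natCast, ← rpow_add hy.1, add_comm]

lemma integrableOn_compl_ball_rpow_neg_norm {r : ℝ} (hr : (finrank ℝ E : ℝ) < r) :
    IntegrableOn (fun x : E => ‖x‖ ^ (-r)) (ball 0 1)ᶜ μ := by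
  have hr0 : 0 ≤ r := (Nat.cast_nonneg _).trans hr.le
  refine Integrable.mono' ((integrable_one_add_norm hr).const_mul (2 ^ r)).integrableOn
    (by fun_prop : Measurable fun x : E => ‖x‖ ^ (-r)).aestronglyMeasurable.restrict ?_
  filter_upwards [ae_restrict_mem measurableSet_ball.compl] with x hx
  have hx1 : 1 ≤ ‖x‖ := by simpa using hx
  calc ‖‖x‖ ^ (-r)‖ = ‖x‖ ^ (-r) := norm_of_nonneg (by positivity)
    _ ≤ ((1 + ‖x‖) / 2) ^ (-r) := rpow_le_rpow_of_nonpos (by positivity) (by linarith) (by linarith)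
    _ = 2 ^ r * (1 + ‖x‖) ^ (-r) := by
      rw [div_rpow (by positivity) zero_le_two, rpow_neg zero_le_two]
      field_simp

variable {F : Type*} [NormedAddCommGroup F]

lemma integrable_norm_sq_mul_rpow_neg_norm {g : E → F} (hg : AEStronglyMeasurable g μ)
    {M C α b : ℝ} (hM : ∀ x, ‖g x‖ ≤ M) (hC : ∀ x, ‖g x‖ ≤ C * ‖x‖ ^ α)
    (hb : (finrank ℝ E : ℝ) < b) (hbα : b < finrank ℝ E + 2 * α) :
    Integrable (fun x => ‖g x‖ ^ 2 * ‖x‖ ^ (-b)) μ := by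
  have hb0 : 0 < b := (Nat.cast_nonneg _).trans_lt hb
  have hmeas : AEStronglyMeasurable (fun x => ‖g x‖ ^ 2 * ‖x‖ ^ (-b)) μ :=
    (hg.norm.pow 2).mul (by fun_prop : Measurable fun x : E => ‖x‖ ^ (-b)).aestronglyMeasurable
  rw [← integrableOn_univ, ← union_compl_self (ball (0 : E) 1)]
  refine IntegrableOn.union ?_ ?_
  · refine Integrable.mono'
      ((integrableOn_ball_rpow_norm μ (s := 2 * α - b) (by linarith) 1).const_mul (C ^ 2))
      hmeas.restrict (.of_forall fun x => ?_)
    rw [norm_of_nonneg (by positivity)]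
    rcases eq_or_ne x 0 with rfl | hx
    · simp only [norm_zero, zero_rpow (neg_ne_zero.2 hb0.ne'), mul_zero]
      positivity
    have hx0 : 0 < ‖x‖ := norm_pos_iff.2 hx
    calc ‖g x‖ ^ 2 * ‖x‖ ^ (-b) ≤ (C * ‖x‖ ^ α) ^ 2 * ‖x‖ ^ (-b) := by
          gcongr; exact hC x
      _ = C ^ 2 * ‖x‖ ^ (2 * α - b) := by
          rw [sub_eq_add_neg, rpow_add hx0, mul_comm 2 α, rpow_mul hx0.le, rpow_two]; ring
  · refine Integrable.mono' ((integrableOn_compl_ball_rpow_neg_norm μ hb).const_mul (M ^ 2))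
      hmeas.restrict (.of_forall fun x => ?_)
    rw [norm_of_nonneg (by positivity)]
    gcongr
    exact hM x

end RadialIntegrability

lemma norm_cexp_I_mul_ofReal_sub_one_le_two_mul_rpow (t : ℝ) {α : ℝ} (hα0 : 0 ≤ α)
    (hα1 : α ≤ 1) : ‖Complex.exp (Complex.I * t) - 1‖ ≤ 2 * |t| ^ α := by
  rcases le_or_gt |t| 1 with ht | ht
  · calc ‖Complex.exp (Complex.I * t) - 1‖ ≤ |t| := norm_exp_I_mul_ofReal_sub_one_le
      _ ≤ |t| ^ α := by simpa using rpow_le_rpow_of_exponent_ge' (abs_nonneg t) ht hα0 hα1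
      _ ≤ 2 * |t| ^ α := le_mul_of_one_le_left (by positivity) one_le_two
  · calc ‖Complex.exp (Complex.I * t) - 1‖ ≤ ‖Complex.exp (Complex.I * t)‖ + ‖(1 : ℂ)‖ :=
          norm_sub_le _ _
      _ = 2 * 1 := by rw [Complex.norm_exp_I_mul_ofReal, norm_one]; norm_num
      _ ≤ 2 * |t| ^ α := by gcongr; exact one_le_rpow ht.le hα0

lemma integrable_abs_mul_rpow_norm_of_le {E : Type*} [NormedAddCommGroup E] [MeasurableSpace E]
    [OpensMeasurableSpace E] {μ : Measure E} {f : E → ℝ} {α β : ℝ} (hf : Integrable f μ)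
    (hβ : Integrable (fun z => |f z| * ‖z‖ ^ β) μ) (hα : 0 ≤ α) (hαβ : α ≤ β) :
    Integrable (fun z => |f z| * ‖z‖ ^ α) μ := by
  refine (hf.abs.add hβ).mono' (hf.abs.aestronglyMeasurable.mul
    (by fun_prop : Measurable fun z : E => ‖z‖ ^ α).aestronglyMeasurable) (.of_forall fun z => ?_)
  have hz : ‖z‖ ^ α ≤ 1 + ‖z‖ ^ β := by
    rcases le_or_gt ‖z‖ 1 with hz | hz
    · linarith [rpow_le_one (norm_nonneg z) hz hα, rpow_nonneg (norm_nonneg z) β]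
    · linarith [rpow_le_rpow_of_exponent_le hz.le hαβ]
  rw [norm_of_nonneg (by positivity)]
  calc |f z| * ‖z‖ ^ α ≤ |f z| * (1 + ‖z‖ ^ β) := by gcongr
    _ = |f z| + |f z| * ‖z‖ ^ β := by ring

section FourierHat

variable {E : Type*} [NormedAddCommGroup E] [InnerProductSpace ℝ E]

lemma norm_cexp_inner_mul (x z : E) (a : ℝ) :
    ‖Complex.exp (Complex.I * ((inner ℝ x z : ℝ) : ℂ)) * (a : ℂ)‖ = |a| := by
  rw [norm_mul, Complex.norm_exp_I_mul_ofReal, one_mul, Complex.norm_real, norm_eq_abs]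

variable [MeasurableSpace E] {μ : Measure E} {f : E → ℝ}

/-- The Fourier transform in the paper's normalization `f̂(x) = ∫ e^{i ⟪x, z⟫} f(z) dz`, which
differs from `Real.fourierIntegral` by the sign and the factor `2π` in the exponent. -/
noncomputable def fourierHat (μ : Measure E) (f : E → ℝ) (x : E) : ℂ :=
  ∫ z, Complex.exp (Complex.I * ((inner ℝ x z : ℝ) : ℂ)) * (f z : ℂ) ∂μ

lemma norm_fourierHat_le (x : E) :
    ‖fourierHat μ f x‖ ≤ ∫ z, |f z| ∂μ :=
  (norm_integral_le_integral_norm _).trans_eq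
    (integral_congr_ae (.of_forall fun z => norm_cexp_inner_mul x z (f z)))

variable [OpensMeasurableSpace E]

lemma integrable_cexp_inner_mul (hf : Integrable f μ) (x : E) :
    Integrable (fun z => Complex.exp (Complex.I * ((inner ℝ x z : ℝ) : ℂ)) * (f z : ℂ)) μ :=
  hf.abs.mono' ((by fun_prop : Continuous fun z : E =>
      Complex.exp (Complex.I * ((inner ℝ x z : ℝ) : ℂ))).aestronglyMeasurable.mul
      hf.ofReal.aestronglyMeasurable)
    (.of_forall fun z => (norm_cexp_inner_mul x z (f z)).le)

lemma continuous_fourierHat (hf : Integrable f μ) : Continuous (fourierHat μ f) :=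
  continuous_of_dominated (fun x => (integrable_cexp_inner_mul hf x).aestronglyMeasurable)
    (fun x => .of_forall fun z => (norm_cexp_inner_mul x z (f z)).le) hf.abs
    (.of_forall fun z => by fun_prop)

lemma norm_fourierHat_le_mul_rpow_norm (hf : Integrable f μ) (hzero : ∫ z, f z ∂μ = 0)
    {α : ℝ} (hα0 : 0 ≤ α) (hα1 : α ≤ 1) (hmom : Integrable (fun z => |f z| * ‖z‖ ^ α) μ)
    (x : E) : ‖fourierHat μ f x‖ ≤ 2 * (∫ z, |f z| * ‖z‖ ^ α ∂μ) * ‖x‖ ^ α := by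
  have hcentered : fourierHat μ f x =
      ∫ z, (Complex.exp (Complex.I * ((inner ℝ x z : ℝ) : ℂ)) - 1) * (f z : ℂ) ∂μ := by
    have hfC : Integrable (fun z => (f z : ℂ)) μ := hf.ofReal
    simp only [sub_mul, one_mul]
    rw [integral_sub (integrable_cexp_inner_mul hf x) hfC, integral_complex_ofReal, hzero,
      Complex.ofReal_zero, sub_zero, fourierHat]
  have hbound : ∀ z, ‖(Complex.exp (Complex.I * ((inner ℝ x z : ℝ) : ℂ)) - 1) * (f z : ℂ)‖ ≤
      2 * ‖x‖ ^ α * (|f z| * ‖z‖ ^ α) := fun z => by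
    rw [norm_mul, Complex.norm_real, norm_eq_abs]
    calc ‖Complex.exp (Complex.I * ((inner ℝ x z : ℝ) : ℂ)) - 1‖ * |f z|
        ≤ 2 * |inner ℝ x z| ^ α * |f z| := by
          gcongr; exact norm_cexp_I_mul_ofReal_sub_one_le_two_mul_rpow _ hα0 hα1
      _ ≤ 2 * (‖x‖ * ‖z‖) ^ α * |f z| := by gcongr; exact abs_real_inner_le_norm x z
      _ = 2 * ‖x‖ ^ α * (|f z| * ‖z‖ ^ α) := by
          rw [mul_rpow (norm_nonneg x) (norm_nonneg z)]; ring
  calc ‖fourierHat μ f x‖ ≤ ∫ z, 2 * ‖x‖ ^ α * (|f z| * ‖z‖ ^ α) ∂μ := by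
        rw [hcentered]; exact norm_integral_le_of_norm_le (hmom.const_mul _) (.of_forall hbound)
    _ = 2 * (∫ z, |f z| * ‖z‖ ^ α ∂μ) * ‖x‖ ^ α := by rw [integral_const_mul]; ring

end FourierHat

theorem stmt15_general (d : ℕ) (H : ℝ)
    (hH1 : 2 / ((d : ℝ) + 2) < H) (hH2 : H < 2 / (d : ℝ))
    (f : EuclideanSpace ℝ (Fin d) → ℝ) (hf : Integrable f)
    (hzero : ∫ z, f z = 0)
    (hmom : Integrable (fun z : EuclideanSpace ℝ (Fin d) => |f z| * ‖z‖ ^ (2 / H - d))) :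
    Integrable (fun x : EuclideanSpace ℝ (Fin d) =>
      ‖∫ z, Complex.exp (Complex.I * ((inner ℝ x z : ℝ) : ℂ)) * (f z : ℂ)‖ ^ 2 *
        ‖x‖ ^ (-(2 / H))) := by
  have hH : 0 < H := (by positivity : (0 : ℝ) < 2 / (d + 2)).trans hH1
  have hdH : (d : ℝ) < 2 / H := by
    rcases Nat.eq_zero_or_pos d with rfl | hd_pos
    · simpa using hH
    rw [lt_div_iff₀ hH, mul_comm]
    rwa [lt_div_iff₀ (by positivity)] at hH2
  have hHd : 2 / H < d + 2 := by
    rw [div_lt_iff₀ hH, mul_comm]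
    rwa [div_lt_iff₀ (by positivity)] at hH1
  set α := min (2 / H - d) 1
  have hα : 0 ≤ α := le_min (by linarith) zero_le_one
  have hmomα := integrable_abs_mul_rpow_norm_of_le hf hmom hα (min_le_left _ _)
  refine integrable_norm_sq_mul_rpow_neg_norm volume
    (continuous_fourierHat hf).aestronglyMeasurable (norm_fourierHat_le (f := f))
    (norm_fourierHat_le_mul_rpow_norm hf hzero hα (min_le_right _ _) hmomα)
    (by simpa using hdH) ?_
  rw [finrank_euclideanSpace_fin]
  rcases min_cases (2 / H - d) 1 with ⟨h, -⟩ | ⟨h, -⟩ <;> linarith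

theorem stmt15 (d : ℕ) (hd : 1 ≤ d) (H : ℝ)
    (hH1 : 2 / ((d : ℝ) + 2) < H) (hH2 : H < 2 / (d : ℝ))
    (f : EuclideanSpace ℝ (Fin d) → ℝ) (hf : Integrable f)
    (hzero : ∫ z, f z = 0)
    (hmom : Integrable (fun z : EuclideanSpace ℝ (Fin d) => |f z| * ‖z‖ ^ (2 / H - d))) :
    Integrable (fun x : EuclideanSpace ℝ (Fin d) =>
      ‖∫ z, Complex.exp (Complex.I * ((inner ℝ x z : ℝ) : ℂ)) * (f z : ℂ)‖ ^ 2 *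
        ‖x‖ ^ (-(2 / H))) :=
  stmt15_general d H hH1 hH2 f hf hzero hmom
end
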